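/- arXiv:2508.18564 — 3 statements merged into one kernel-verified Lean document; each statement's English description precedes it below -/
import Mathlib

section
/- Let P_k = {P₁,…,P_k} be a partition of [0,1] into measurable sets. For any n > k there exists an equipartition E_n of [0,1] into n sets of equal measure such that any step function F : [0,1]^p → ℝ^d over P_k (constant on products of parts of P_k) admits a step function F' over E_n with ‖F − F'‖₁ ≤ p · ‖F‖_∞ · (k/n). -/
open MeasureTheory
open scoped ENNReal

/-- `P` is a partition of `[0,1]` into measurable sets. -/
def IsPartition {k : ℕ} (P : Fin k → Set ℝ) : Prop :=
  (∀ i, MeasurableSet (P i)) ∧ Pairwise (Function.onFun Disjoint P) ∧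
    (⋃ i, P i) = Set.Icc 0 1

/-- `F : [0,1]^p → ℝ^d` is a step function over the partition `P`. -/
def IsStepFun {k p d : ℕ} (P : Fin k → Set ℝ) (F : (Fin p → ℝ) → Fin d → ℝ) : Prop :=
  ∃ c : (Fin p → Fin k) → Fin d → ℝ,
    ∀ x, F x = ∑ j : Fin p → Fin k,
      (∏ l, Set.indicator (P (j l)) (fun _ => (1:ℝ)) (x l)) • c j

namespace Equitize

noncomputable def fQ (Q : ℕ → Set ℝ) (i : ℕ) (t : ℝ) : ℝ :=
  (volume (Q i ∩ Set.Icc 0 t)).toReal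

noncomputable def sQ (Q : ℕ → Set ℝ) (i : ℕ) : ℝ :=
  ∑ j ∈ Finset.range i, (volume (Q j)).toReal

noncomputable def gQ (Q : ℕ → Set ℝ) (k : ℕ) (t : ℝ) : ℝ :=
  ∑ i ∈ Finset.range k, Set.indicator (Q i) (fun s => sQ Q i + fQ Q i s) t

structure Setup (k : ℕ) (Q : ℕ → Set ℝ) : Prop where
  meas : ∀ i, MeasurableSet (Q i)
  disj : ∀ i j, i ≠ j → Disjoint (Q i) (Q j)
  cover : (⋃ i ∈ Finset.range k, Q i) = Set.Icc (0:ℝ) 1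

variable {k : ℕ} {Q : ℕ → Set ℝ}

lemma Setup.sub (hS : Setup k Q) {i : ℕ} (hi : i < k) : Q i ⊆ Set.Icc 0 1 := by
  intro t ht
  rw [← hS.cover]
  exact Set.mem_biUnion (Finset.mem_range.2 hi) ht

lemma Setup.vol_ne_top (hS : Setup k Q) {i : ℕ} (hi : i < k) : volume (Q i) ≠ ⊤ := by
  refine ne_top_of_le_ne_top ?_ (measure_mono (hS.sub hi))
  simp [Real.volume_Icc]

lemma fQ_mono (i : ℕ) : Monotone (fQ Q i) := by
  intro t t' h
  have hfin : volume (Q i ∩ Set.Icc 0 t') ≠ ⊤ := by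
    refine ne_top_of_le_ne_top ?_ (measure_mono Set.inter_subset_right)
    simp [Real.volume_Icc]
  exact ENNReal.toReal_mono hfin (measure_mono (Set.inter_subset_inter_right _ (Set.Icc_subset_Icc_right h)))

lemma fQ_nonneg (i : ℕ) (t : ℝ) : 0 ≤ fQ Q i t := ENNReal.toReal_nonneg

lemma fQ_le (hS : Setup k Q) {i : ℕ} (hi : i < k) (t : ℝ) : fQ Q i t ≤ (volume (Q i)).toReal :=
  ENNReal.toReal_mono (hS.vol_ne_top hi) (measure_mono Set.inter_subset_left)

lemma fQ_inter_ne_top (i : ℕ) (t : ℝ) : volume (Q i ∩ Set.Icc 0 t) ≠ ⊤ := by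
  refine ne_top_of_le_ne_top ?_ (measure_mono Set.inter_subset_right)
  simp [Real.volume_Icc]

lemma fQ_lip (i : ℕ) {t t' : ℝ} (h : t ≤ t') : fQ Q i t' ≤ fQ Q i t + (t' - t) := by
  have hsub : Q i ∩ Set.Icc 0 t' ⊆ (Q i ∩ Set.Icc 0 t) ∪ Set.Icc t t' := by
    intro s hs
    rcases le_or_gt s t with h'|h'
    · exact Or.inl ⟨hs.1, hs.2.1, h'⟩
    · exact Or.inr ⟨h'.le, hs.2.2⟩
  have h1 : volume (Q i ∩ Set.Icc 0 t') ≤ volume (Q i ∩ Set.Icc 0 t) + volume (Set.Icc t t') :=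
    le_trans (measure_mono hsub) (measure_union_le _ _)
  have h2 : volume (Set.Icc t t') = ENNReal.ofReal (t' - t) := by simp [Real.volume_Icc]
  have := ENNReal.toReal_mono (by
      rw [h2]; exact ENNReal.add_ne_top.2 ⟨fQ_inter_ne_top i t, ENNReal.ofReal_ne_top⟩) h1
  rw [ENNReal.toReal_add (fQ_inter_ne_top i t) (by rw [h2]; exact ENNReal.ofReal_ne_top)] at this
  have h3 : (volume (Set.Icc t t')).toReal ≤ t' - t := by
    rw [h2, ENNReal.toReal_ofReal (by linarith)]
  show (volume (Q i ∩ Set.Icc 0 t')).toReal ≤ (volume (Q i ∩ Set.Icc 0 t)).toReal + (t' - t)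
  linarith

lemma fQ_one (hS : Setup k Q) {i : ℕ} (hi : i < k) : fQ Q i 1 = (volume (Q i)).toReal := by
  unfold fQ
  rw [Set.inter_eq_left.2 (hS.sub hi)]

lemma fQ_meas (i : ℕ) : Measurable (fQ Q i) := (fQ_mono i).measurable

lemma gQ_meas (hS : Setup k Q) : Measurable (gQ Q k) := by
  apply Finset.measurable_sum
  intro i _
  exact (measurable_const.add (fQ_meas i)).indicator (hS.meas i)

lemma sQ_mono : Monotone (sQ Q) := by
  intro a b h
  exact Finset.sum_le_sum_of_subset_of_nonneg (Finset.range_subset_range.2 h)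
    (fun _ _ _ => ENNReal.toReal_nonneg)

lemma sQ_nonneg (i : ℕ) : 0 ≤ sQ Q i := Finset.sum_nonneg fun _ _ => ENNReal.toReal_nonneg

lemma sQ_succ (i : ℕ) : sQ Q (i+1) = sQ Q i + (volume (Q i)).toReal :=
  Finset.sum_range_succ _ _

lemma sQ_total (hS : Setup k Q) : sQ Q k = 1 := by
  have h1 : volume (⋃ i ∈ Finset.range k, Q i) = ∑ i ∈ Finset.range k, volume (Q i) := by
    apply measure_biUnion_finset
    · intro i _ j _ hij
      exact hS.disj i j hij
    · intro i _
      exact hS.meas i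
  rw [hS.cover] at h1
  have h2 : (volume (Set.Icc (0:ℝ) 1)).toReal = 1 := by simp [Real.volume_Icc]
  rw [h1] at h2
  rw [ENNReal.toReal_sum (fun i hi => hS.vol_ne_top (Finset.mem_range.1 hi))] at h2
  exact h2.symm ▸ rfl

lemma gQ_eq (hS : Setup k Q) {i : ℕ} (hi : i < k) {t : ℝ} (ht : t ∈ Q i) :
    gQ Q k t = sQ Q i + fQ Q i t := by
  unfold gQ
  rw [Finset.sum_eq_single_of_mem i (Finset.mem_range.2 hi)]
  · rw [Set.indicator_of_mem ht]
  · intro j _ hj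
    apply Set.indicator_of_notMem
    exact fun htj => (Set.disjoint_left.1 (hS.disj j i hj)) htj ht

lemma exists_mem (hS : Setup k Q) {t : ℝ} (ht : t ∈ Set.Icc (0:ℝ) 1) :
    ∃ i, i < k ∧ t ∈ Q i := by
  rw [← hS.cover] at ht
  simpa [Finset.mem_range] using ht

lemma gQ_mem (hS : Setup k Q) {i : ℕ} (hi : i < k) {t : ℝ} (ht : t ∈ Q i) :
    gQ Q k t ∈ Set.Icc (sQ Q i) (sQ Q (i+1)) := by
  rw [gQ_eq hS hi ht, sQ_succ]
  constructor
  · linarith [fQ_nonneg (Q := Q) i t]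
  · linarith [fQ_le hS hi t]

lemma gQ_bounds (hS : Setup k Q) {t : ℝ} (ht : t ∈ Set.Icc (0:ℝ) 1) :
    gQ Q k t ∈ Set.Icc (0:ℝ) 1 := by
  obtain ⟨i, hi, hti⟩ := exists_mem hS ht
  have h := gQ_mem hS hi hti
  constructor
  · exact le_trans (sQ_nonneg i) h.1
  · exact le_trans h.2 (by rw [← sQ_total hS]; exact sQ_mono hi)


/-- Key: splitting a part at a given measure level. -/
lemma key1 (hS : Setup k Q) {i : ℕ} (hi : i < k) {c : ℝ} (hc0 : 0 ≤ c)
    (hcm : c ≤ (volume (Q i)).toReal) :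
    volume (Q i ∩ {t | fQ Q i t ≤ c}) = ENNReal.ofReal c := by
  set f := fQ Q i with hf
  set S := {t : ℝ | t ∈ Set.Icc (0:ℝ) 1 ∧ f t ≤ c} with hSdef
  have hS0 : (0:ℝ) ∈ S := by
    constructor
    · exact Set.mem_Icc.2 ⟨le_rfl, zero_le_one⟩
    · have : f 0 = 0 := by
        have : volume (Q i ∩ Set.Icc (0:ℝ) 0) ≤ volume (Set.Icc (0:ℝ) 0) :=
          measure_mono Set.inter_subset_right
        simp [Real.volume_Icc] at this
        simp [hf, fQ, this]
      linarith
  have hSbdd : BddAbove S := ⟨1, fun t ht => ht.1.2⟩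
  set T := sSup S with hT
  have hT1 : T ≤ 1 := csSup_le ⟨0, hS0⟩ (fun t ht => ht.1.2)
  have hT0 : 0 ≤ T := le_csSup hSbdd hS0
  have hfT_le : f T ≤ c := by
    by_contra hlt
    push_neg at hlt
    have hub : ∀ t ∈ S, t ≤ T - (f T - c) := by
      intro t ht
      have htT : t ≤ T := le_csSup hSbdd ht
      have := fQ_lip (Q := Q) i htT
      have h2 : f T - f t ≤ T - t := by rw [hf]; linarith
      have : f T - c ≤ T - t := by linarith [ht.2]
      linarith
    have := csSup_le ⟨0, hS0⟩ hub
    rw [← hT] at this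
    linarith
  have hfT_ge : c ≤ f T := by
    by_contra hlt
    push_neg at hlt
    have hf1 : f 1 = (volume (Q i)).toReal := fQ_one hS hi
    have hTlt1 : T < 1 := by
      rcases lt_or_ge T 1 with h|h
      · exact h
      · exfalso
        have : f 1 ≤ f T := fQ_mono i h
        linarith
    set t' := min 1 (T + (c - f T)) with ht'
    have ht'T : T < t' := lt_min hTlt1 (by linarith)
    have ht'mem : t' ∈ S := by
      constructor
      · exact Set.mem_Icc.2 ⟨le_min zero_le_one (by linarith), min_le_left _ _⟩
      · have h1 : f t' ≤ f T + (t' - T) := fQ_lip i ht'T.le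
        have h2 : t' ≤ T + (c - f T) := min_le_right _ _
        linarith
    linarith [le_csSup hSbdd ht'mem]
  have hfTc : f T = c := le_antisymm hfT_le hfT_ge
  have hset : Q i ∩ {t | f t ≤ c} = Q i ∩ Set.Icc 0 T := by
    ext t
    constructor
    · rintro ⟨htQ, htf⟩
      have htI : t ∈ Set.Icc (0:ℝ) 1 := hS.sub hi htQ
      exact ⟨htQ, htI.1, le_csSup hSbdd ⟨htI, htf⟩⟩
    · rintro ⟨htQ, _, htT⟩
      exact ⟨htQ, by have := fQ_mono (Q := Q) i htT; rw [← hf] at this; simpa [hfTc] using this.trans hfT_le⟩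
  rw [hset, ← hfTc]
  exact (ENNReal.ofReal_toReal (fQ_inter_ne_top i T)).symm

lemma lemA (hS : Setup k Q) {a : ℝ} (ha0 : 0 ≤ a) (ha1 : a ≤ 1) :
    volume {t ∈ Set.Icc (0:ℝ) 1 | gQ Q k t ≤ a} = ENNReal.ofReal a := by
  have hset : {t ∈ Set.Icc (0:ℝ) 1 | gQ Q k t ≤ a} =
      ⋃ i ∈ Finset.range k, (Q i ∩ {t | fQ Q i t ≤ a - sQ Q i}) := by
    ext t
    constructor
    · rintro ⟨htI, htg⟩
      obtain ⟨i, hi, hti⟩ := exists_mem hS htI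
      refine Set.mem_biUnion (Finset.mem_range.2 hi) ⟨hti, ?_⟩
      have := gQ_eq hS hi hti
      simp only [Set.mem_setOf_eq]
      linarith
    · intro ht
      simp only [Set.mem_iUnion] at ht
      obtain ⟨i, hi, htQ, htf⟩ := ht
      have hi' := Finset.mem_range.1 hi
      refine ⟨hS.sub hi' htQ, ?_⟩
      have := gQ_eq hS hi' htQ
      simp only [Set.mem_setOf_eq] at htf ⊢
      linarith
  rw [hset]
  have hmeas : ∀ i ∈ Finset.range k, MeasurableSet (Q i ∩ {t | fQ Q i t ≤ a - sQ Q i}) := by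
    intro i _
    exact (hS.meas i).inter (measurableSet_le (fQ_meas i) measurable_const)
  rw [measure_biUnion_finset (fun i _ j _ hij => Disjoint.mono Set.inter_subset_left
    Set.inter_subset_left (hS.disj i j hij)) hmeas]
  have hterm : ∀ i ∈ Finset.range k, volume (Q i ∩ {t | fQ Q i t ≤ a - sQ Q i}) =
      ENNReal.ofReal (min a (sQ Q (i+1)) - min a (sQ Q i)) := by
    intro i hi
    have hi' := Finset.mem_range.1 hi
    have hssucc : sQ Q (i+1) = sQ Q i + (volume (Q i)).toReal := sQ_succ i
    rcases lt_or_ge a (sQ Q i) with hlt|hge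
    · have hempty : Q i ∩ {t | fQ Q i t ≤ a - sQ Q i} = ∅ := by
        ext t
        simp only [Set.mem_inter_iff, Set.mem_setOf_eq, Set.mem_empty_iff_false, iff_false]
        rintro ⟨_, htf⟩
        linarith [fQ_nonneg (Q := Q) i t]
      rw [hempty]
      have h1 : min a (sQ Q (i+1)) = a := min_eq_left (by
        have := sQ_mono (Q := Q) (Nat.le_succ i); linarith)
      have h2 : min a (sQ Q i) = a := min_eq_left hlt.le
      simp [h1, h2]
    · rcases le_or_gt a (sQ Q (i+1)) with hle|hgt
      · have h1 : min a (sQ Q (i+1)) = a := min_eq_left hle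
        have h2 : min a (sQ Q i) = sQ Q i := min_eq_right hge
        rw [h1, h2]
        exact key1 hS hi' (by linarith) (by rw [hssucc] at hle; linarith)
      · have hfull : Q i ∩ {t | fQ Q i t ≤ a - sQ Q i} = Q i := by
          apply Set.inter_eq_left.2
          intro t htQ
          have := fQ_le hS hi' t
          simp only [Set.mem_setOf_eq]
          rw [hssucc] at hgt
          linarith
        rw [hfull]
        have h1 : min a (sQ Q (i+1)) = sQ Q (i+1) := min_eq_right hgt.le
        have h2 : min a (sQ Q i) = sQ Q i := min_eq_right hge
        rw [h1, h2, hssucc]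
        simp only [add_sub_cancel_left]
        exact (ENNReal.ofReal_toReal (hS.vol_ne_top hi')).symm
  rw [Finset.sum_congr rfl hterm]
  rw [← ENNReal.ofReal_sum_of_nonneg (fun i _ => by
    have : sQ Q i ≤ sQ Q (i+1) := sQ_mono (Nat.le_succ i)
    have : min a (sQ Q i) ≤ min a (sQ Q (i+1)) := min_le_min le_rfl this
    linarith)]
  congr 1
  have htel : ∑ i ∈ Finset.range k, (min a (sQ Q (i+1)) - min a (sQ Q i)) =
      min a (sQ Q k) - min a (sQ Q 0) := Finset.sum_range_sub (fun i => min a (sQ Q i)) k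
  rw [htel, sQ_total hS]
  have h0 : sQ Q 0 = 0 := by simp [sQ]
  rw [h0, min_eq_left ha1, min_eq_right ha0]
  ring

lemma lemB (hS : Setup k Q) {a : ℝ} (ha0 : 0 ≤ a) (ha1 : a ≤ 1) :
    volume {t ∈ Set.Icc (0:ℝ) 1 | gQ Q k t < a} = ENNReal.ofReal a := by
  apply le_antisymm
  · calc volume {t ∈ Set.Icc (0:ℝ) 1 | gQ Q k t < a}
        ≤ volume {t ∈ Set.Icc (0:ℝ) 1 | gQ Q k t ≤ a} :=
          measure_mono (fun t ht => ⟨ht.1, ht.2.le⟩)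
      _ = ENNReal.ofReal a := lemA hS ha0 ha1
  · apply ENNReal.le_of_forall_pos_le_add
    intro ε hε hfin
    set δ := min a (ε : ℝ) with hδ
    have hδ0 : 0 ≤ δ := le_min ha0 (by positivity)
    rcases eq_or_lt_of_le ha0 with h0|hpos
    · simp [← h0]
    have hδpos : 0 < δ := lt_min hpos (by positivity)
    have hsub : {t ∈ Set.Icc (0:ℝ) 1 | gQ Q k t ≤ a - δ} ⊆ {t ∈ Set.Icc (0:ℝ) 1 | gQ Q k t < a} :=
      fun t ht => ⟨ht.1, by have h' : gQ Q k t ≤ a - δ := ht.2; show gQ Q k t < a; linarith⟩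
    have h1 : ENNReal.ofReal (a - δ) ≤ volume {t ∈ Set.Icc (0:ℝ) 1 | gQ Q k t < a} := by
      rw [← lemA hS (by simp [hδ]) (by linarith)]
      exact measure_mono hsub
    calc ENNReal.ofReal a ≤ ENNReal.ofReal (a - δ) + ENNReal.ofReal δ := by
          rw [← ENNReal.ofReal_add (by simp [hδ]) hδ0]
          apply ENNReal.ofReal_le_ofReal
          linarith
      _ ≤ volume {t ∈ Set.Icc (0:ℝ) 1 | gQ Q k t < a} + ε := by
          gcongr
          calc ENNReal.ofReal δ ≤ ENNReal.ofReal (ε : ℝ) :=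
                ENNReal.ofReal_le_ofReal (min_le_right _ _)
            _ = ε := ENNReal.ofReal_coe_nnreal
  
lemma lem_atom (hS : Setup k Q) {a : ℝ} (ha0 : 0 ≤ a) (ha1 : a ≤ 1) :
    volume {t ∈ Set.Icc (0:ℝ) 1 | gQ Q k t = a} = 0 := by
  have hunion : {t ∈ Set.Icc (0:ℝ) 1 | gQ Q k t ≤ a} =
      {t ∈ Set.Icc (0:ℝ) 1 | gQ Q k t < a} ∪ {t ∈ Set.Icc (0:ℝ) 1 | gQ Q k t = a} := by
    ext t
    simp only [Set.mem_setOf_eq, Set.mem_union]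
    constructor
    · rintro ⟨h1, h2⟩
      rcases lt_or_eq_of_le h2 with h|h
      · exact Or.inl ⟨h1, h⟩
      · exact Or.inr ⟨h1, h⟩
    · rintro (⟨h1, h2⟩|⟨h1, h2⟩)
      · exact ⟨h1, h2.le⟩
      · exact ⟨h1, h2.le⟩
  have hmeasA : MeasurableSet {t ∈ Set.Icc (0:ℝ) 1 | gQ Q k t = a} :=
    measurableSet_Icc.inter (measurableSet_eq_fun (gQ_meas hS) measurable_const)
  have hdisj : Disjoint {t ∈ Set.Icc (0:ℝ) 1 | gQ Q k t < a} {t ∈ Set.Icc (0:ℝ) 1 | gQ Q k t = a} := by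
    rw [Set.disjoint_left]
    rintro t ⟨_, h1⟩ ⟨_, h2⟩
    exact absurd h2 (ne_of_lt h1)
  have := measure_union (μ := volume) hdisj hmeasA
  rw [← hunion, lemA hS ha0 ha1, lemB hS ha0 ha1] at this
  have hfin : ENNReal.ofReal a ≠ ⊤ := ENNReal.ofReal_ne_top
  nth_rewrite 1 [← add_zero (ENNReal.ofReal a)] at this
  exact ((ENNReal.add_right_inj hfin).1 this).symm

/-- Evaluation of a step-type sum at a point whose coordinates lie in specified disjoint parts. -/
lemma eval_step {ι : Type*} [Fintype ι] [DecidableEq ι] {p d : ℕ} (R : ι → Set ℝ)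
    (hd : ∀ a b : ι, a ≠ b → Disjoint (R a) (R b)) (c : (Fin p → ι) → Fin d → ℝ)
    (x : Fin p → ℝ) (j₀ : Fin p → ι) (hx : ∀ l, x l ∈ R (j₀ l)) :
    ∑ j : Fin p → ι, (∏ l, Set.indicator (R (j l)) (fun _ => (1:ℝ)) (x l)) • c j = c j₀ := by
  rw [Finset.sum_eq_single j₀]
  · rw [show (∏ l, Set.indicator (R (j₀ l)) (fun _ => (1:ℝ)) (x l)) = 1 from
      Finset.prod_eq_one (fun l _ => Set.indicator_of_mem (hx l) _), one_smul]
  · intro j _ hj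
    have hex : ∃ l, j l ≠ j₀ l := by
      by_contra h; push_neg at h; exact hj (funext h)
    obtain ⟨l, hl⟩ := hex
    have h0 : Set.indicator (R (j l)) (fun _ => (1:ℝ)) (x l) = 0 :=
      Set.indicator_of_notMem (fun hmem => Set.disjoint_left.1 (hd _ _ hl) hmem (hx l)) _
    rw [Finset.prod_eq_zero (Finset.mem_univ l) h0, zero_smul]
  · intro h; exact absurd (Finset.mem_univ j₀) h

lemma meas_coord {ι : Type*} [Fintype ι] {p d : ℕ} (R : ι → Set ℝ)
    (hR : ∀ a, MeasurableSet (R a)) (c : (Fin p → ι) → Fin d → ℝ) (i : Fin d) :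
    Measurable (fun x : Fin p → ℝ =>
      (∑ j : Fin p → ι, (∏ l, Set.indicator (R (j l)) (fun _ => (1:ℝ)) (x l)) • c j) i) := by
  simp only [Finset.sum_apply, Pi.smul_apply, smul_eq_mul]
  apply Finset.measurable_sum
  intro j _
  apply Measurable.mul_const
  apply Finset.measurable_prod
  intro l _
  exact (measurable_const.indicator (hR (j l))).comp (measurable_pi_apply l)

end Equitize

theorem equitizing_partitions (k n : ℕ) (hkn : k < n) (P : Fin k → Set ℝ)
    (hP : IsPartition P) :
    ∃ E : Fin n → Set ℝ, IsPartition E ∧ (∀ i, volume (E i) = (n : ℝ≥0∞)⁻¹) ∧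
      ∀ (p d : ℕ) (F : (Fin p → ℝ) → Fin d → ℝ), IsStepFun P F →
        ∀ C : ℝ, (∀ x, ∑ i, |F x i| ≤ C) →
          ∃ F' : (Fin p → ℝ) → Fin d → ℝ, IsStepFun E F' ∧
            (∫ x in Set.univ.pi (fun _ : Fin p => Set.Icc (0:ℝ) 1),
                ∑ i, |F x i - F' x i|) ≤ (p : ℝ) * C * ((k : ℝ) / n) := by
  classical
  rcases Nat.eq_zero_or_pos k with hk0|hk
  · exfalso
    subst hk0
    have h0 : (0:ℝ) ∈ Set.Icc (0:ℝ) 1 := Set.mem_Icc.2 ⟨le_rfl, zero_le_one⟩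
    rw [← hP.2.2] at h0
    simpa using h0
  have hn : 0 < n := lt_of_le_of_lt (Nat.zero_le k) hkn
  have hnR : (0:ℝ) < n := Nat.cast_pos.2 hn
  set I : Set ℝ := Set.Icc 0 1 with hI
  set Q : ℕ → Set ℝ := fun i => if h : i < k then P ⟨i, h⟩ else ∅ with hQ
  have hQP : ∀ i : Fin k, Q i.val = P i := fun i => by simp [hQ, i.isLt]
  have hS : Equitize.Setup k Q := by
    constructor
    · intro i
      by_cases h : i < k
      · rw [hQ]; simp only [h, dif_pos]; exact hP.1 _
      · rw [hQ]; simp only [h, dif_neg]; exact MeasurableSet.empty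
    · intro i j hij
      by_cases hi : i < k
      · by_cases hj : j < k
        · rw [hQ]; simp only [hi, hj, dif_pos]
          exact hP.2.1 (by simp [Fin.ext_iff, hij])
        · rw [hQ]; simp only [hj, dif_neg]; exact Set.disjoint_empty _
      · rw [hQ]; simp only [hi, dif_neg]; exact Set.empty_disjoint _
    · rw [← hP.2.2]
      ext t
      simp only [Set.mem_iUnion, Finset.mem_range]
      constructor
      · rintro ⟨i, hi, ht⟩
        rw [hQ] at ht; simp only [hi, dif_pos] at ht
        exact ⟨⟨i, hi⟩, ht⟩
      · rintro ⟨i, ht⟩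
        refine ⟨i.val, i.isLt, ?_⟩
        rw [hQP i]; exact ht
  set g : ℝ → ℝ := Equitize.gQ Q k with hg
  have hgmeas : Measurable g := Equitize.gQ_meas hS
  have hgmem : ∀ t ∈ I, g t ∈ I := fun t ht => Equitize.gQ_bounds hS ht
  set E : Fin n → Set ℝ := fun j =>
    I ∩ {t | (j.val : ℝ)/n ≤ g t} ∩
      (if j.val + 1 = n then Set.univ else {t | g t < ((j.val : ℝ)+1)/n}) with hE
  have hEsub : ∀ j, E j ⊆ I := fun j t ht => ht.1.1
  have hEmem : ∀ j : Fin n, ∀ t ∈ E j,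
      (j.val : ℝ)/n ≤ g t ∧ g t ≤ ((j.val : ℝ)+1)/n := by
    intro j t ht
    obtain ⟨⟨htI, htl⟩, htu⟩ := ht
    refine ⟨htl, ?_⟩
    by_cases h : j.val + 1 = n
    · have : ((j.val : ℝ)+1)/n = 1 := by
        have : ((j.val : ℝ)+1) = n := by exact_mod_cast congrArg (Nat.cast (R := ℝ)) h
        rw [this]; field_simp
      rw [this]
      exact (hgmem t htI).2
    · rw [if_neg h] at htu
      exact htu.le
  have hEmeas : ∀ j, MeasurableSet (E j) := by
    intro j
    apply MeasurableSet.inter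
    · exact measurableSet_Icc.inter (measurableSet_le measurable_const hgmeas)
    · split_ifs
      · exact MeasurableSet.univ
      · exact measurableSet_lt hgmeas measurable_const
  have hEdisj' : ∀ j j' : Fin n, j.val < j'.val → Disjoint (E j) (E j') := by
    intro j j' hlt
    rw [Set.disjoint_left]
    intro t htj htj'
    have h1 : j.val + 1 ≠ n := by
      have := j'.isLt; omega
    have htu := htj.2
    rw [if_neg h1] at htu
    have htl := htj'.1.2
    simp only [Set.mem_setOf_eq] at htu htl
    have hcast : ((j.val : ℝ)+1) ≤ (j'.val : ℝ) := by exact_mod_cast hlt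
    have hdiv : ((j.val : ℝ)+1)/n ≤ (j'.val : ℝ)/n := by gcongr
    linarith
  have hEdisj : Pairwise (Function.onFun Disjoint E) := by
    intro j j' hne
    rcases Nat.lt_trichotomy j.val j'.val with h|h|h
    · exact hEdisj' j j' h
    · exact absurd (Fin.ext h) hne
    · exact (hEdisj' j' j h).symm
  have hEcover : (⋃ j, E j) = I := by
    apply Set.Subset.antisymm
    · exact Set.iUnion_subset hEsub
    · intro t ht
      have hgt := hgmem t ht
      set j0 : ℕ := min (⌊(n:ℝ) * g t⌋₊) (n-1) with hj0
      have hj0n : j0 < n := by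
        have : j0 ≤ n - 1 := min_le_right _ _
        omega
      refine Set.mem_iUnion.2 ⟨⟨j0, hj0n⟩, ?_⟩
      have hnggt0 : 0 ≤ (n:ℝ) * g t := by
        have := hgt.1; positivity
      constructor
      · refine ⟨ht, ?_⟩
        have h1 : (j0 : ℝ) ≤ (n:ℝ) * g t := by
          calc (j0 : ℝ) ≤ (⌊(n:ℝ) * g t⌋₊ : ℝ) := by exact_mod_cast min_le_left _ _
            _ ≤ (n:ℝ) * g t := Nat.floor_le hnggt0
        show (j0 : ℝ)/n ≤ g t
        rw [div_le_iff₀ hnR]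
        linarith
      · by_cases h : j0 + 1 = n
        · show t ∈ if j0 + 1 = n then Set.univ else _
          rw [if_pos h]
          trivial
        · show t ∈ if j0 + 1 = n then Set.univ else {t | g t < ((j0 : ℝ)+1)/n}
          rw [if_neg h]
          have hfl : ⌊(n:ℝ) * g t⌋₊ ≤ n - 1 := by
            by_contra hcon
            push_neg at hcon
            have : j0 = n - 1 := by omega
            omega
          have hj0fl : j0 = ⌊(n:ℝ) * g t⌋₊ := min_eq_left hfl
          have h2 : (n:ℝ) * g t < (⌊(n:ℝ) * g t⌋₊ : ℝ) + 1 := Nat.lt_floor_add_one _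
          show g t < ((j0 : ℝ)+1)/n
          rw [lt_div_iff₀ hnR]
          rw [hj0fl]
          linarith
  have hEvol : ∀ j : Fin n, volume (E j) = (n : ℝ≥0∞)⁻¹ := by
    intro j
    have haj0 : (0:ℝ) ≤ (j.val : ℝ)/n := by positivity
    have haj1 : (j.val : ℝ)/n ≤ 1 := by
      rw [div_le_one hnR]
      exact_mod_cast j.isLt.le
    have hofr : ENNReal.ofReal ((n:ℝ)⁻¹) = (n : ℝ≥0∞)⁻¹ := by
      rw [ENNReal.ofReal_inv_of_pos hnR, ENNReal.ofReal_natCast]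
    by_cases h : j.val + 1 = n
    · have hset : E j = I \ {t ∈ I | g t < (j.val : ℝ)/n} := by
        ext t
        simp only [hE, h, if_pos, Set.mem_inter_iff, Set.mem_setOf_eq, Set.mem_diff,
          Set.mem_univ, and_true]
        constructor
        · rintro ⟨htI, htl⟩
          exact ⟨htI, fun hc => absurd hc.2 (not_lt.2 htl)⟩
        · rintro ⟨htI, hnc⟩
          refine ⟨htI, ?_⟩
          by_contra hcon
          push_neg at hcon
          exact hnc ⟨htI, hcon⟩
      rw [hset]
      have hm1 : MeasurableSet {t | t ∈ I ∧ g t < (j.val : ℝ)/n} := by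
        exact measurableSet_Icc.inter (measurableSet_lt hgmeas measurable_const)
      have hfin1 : volume {t | t ∈ I ∧ g t < (j.val : ℝ)/n} ≠ ⊤ := by
        rw [Equitize.lemB hS haj0 haj1]; exact ENNReal.ofReal_ne_top
      rw [measure_diff (fun t ht => ht.1) hm1.nullMeasurableSet hfin1]
      rw [Equitize.lemB hS haj0 haj1]
      have hvolI : volume I = 1 := by simp [hI, Real.volume_Icc]
      rw [hvolI]
      have hcast : (j.val : ℝ) + 1 = n := by exact_mod_cast congrArg (Nat.cast (R := ℝ)) h
      rw [show (1 : ℝ≥0∞) = ENNReal.ofReal 1 by simp]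
      rw [← ENNReal.ofReal_sub 1 haj0, ← hofr]
      congr 1
      field_simp
      linarith
    · have hbj1 : ((j.val : ℝ)+1)/n ≤ 1 := by
        rw [div_le_one hnR]
        have : (j.val : ℝ) + 1 ≤ n := by exact_mod_cast j.isLt
        linarith
      have hbj0 : (0:ℝ) ≤ ((j.val : ℝ)+1)/n := by positivity
      have hset : E j = {t ∈ I | g t < ((j.val : ℝ)+1)/n} \ {t ∈ I | g t < (j.val : ℝ)/n} := by
        ext t
        simp only [hE, if_neg h, Set.mem_inter_iff, Set.mem_setOf_eq, Set.mem_diff]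
        constructor
        · rintro ⟨⟨htI, htl⟩, htu⟩
          exact ⟨⟨htI, htu⟩, fun hc => absurd hc.2 (not_lt.2 htl)⟩
        · rintro ⟨⟨htI, htu⟩, hnc⟩
          refine ⟨⟨htI, ?_⟩, htu⟩
          by_contra hcon
          push_neg at hcon
          exact hnc ⟨htI, hcon⟩
      rw [hset]
      have hm1 : MeasurableSet {t | t ∈ I ∧ g t < (j.val : ℝ)/n} := by
        exact measurableSet_Icc.inter (measurableSet_lt hgmeas measurable_const)
      have hfin1 : volume {t | t ∈ I ∧ g t < (j.val : ℝ)/n} ≠ ⊤ := by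
        rw [Equitize.lemB hS haj0 haj1]; exact ENNReal.ofReal_ne_top
      have hsub1 : {t | t ∈ I ∧ g t < (j.val : ℝ)/n} ⊆ {t | t ∈ I ∧ g t < ((j.val : ℝ)+1)/n} := by
        rintro t ⟨htI, htl⟩
        refine ⟨htI, lt_of_lt_of_le htl ?_⟩
        gcongr
        linarith
      rw [measure_diff hsub1 hm1.nullMeasurableSet hfin1]
      rw [Equitize.lemB hS haj0 haj1, Equitize.lemB hS hbj0 hbj1]
      rw [← ENNReal.ofReal_sub _ haj0, ← hofr]
      congr 1
      field_simp
      ring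
  refine ⟨E, ⟨hEmeas, hEdisj, hEcover⟩, hEvol, ?_⟩
  intro p d F hF C hC
  obtain ⟨c, hc⟩ := hF
  have hC0 : 0 ≤ C := le_trans (Finset.sum_nonneg (fun i _ => abs_nonneg _)) (hC (fun _ => 0))
  set good : Fin n → Prop := fun j => ∃ i : Fin k,
    Set.Icc ((j.val : ℝ)/n) (((j.val : ℝ)+1)/n) ⊆
      Set.Icc (Equitize.sQ Q i.val) (Equitize.sQ Q (i.val+1)) with hgood
  set iMap : Fin n → Fin k := fun j => if h : good j then h.choose else ⟨0, hk⟩ with hiMap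
  have hiMapSpec : ∀ j, good j → Set.Icc ((j.val : ℝ)/n) (((j.val : ℝ)+1)/n) ⊆
      Set.Icc (Equitize.sQ Q (iMap j).val) (Equitize.sQ Q ((iMap j).val+1)) := by
    intro j hj
    rw [hiMap]
    simp only [dif_pos hj]
    exact hj.choose_spec
  set c' : (Fin p → Fin n) → Fin d → ℝ := fun j' =>
    if ∀ l, good (j' l) then c (fun l => iMap (j' l)) else 0 with hc'
  set F' : (Fin p → ℝ) → Fin d → ℝ := fun x =>
    ∑ j' : Fin p → Fin n, (∏ l, Set.indicator (E (j' l)) (fun _ => (1:ℝ)) (x l)) • c' j' with hF'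
  refine ⟨F', ⟨c', fun x => rfl⟩, ?_⟩
  -- bad indices and witnesses
  set badF : Finset (Fin n) := Finset.univ.filter (fun j => ¬ good j) with hbadF
  have hwit : ∀ j : Fin n, ¬ good j → ∃ w : ℕ, (1 ≤ w ∧ w ≤ k) ∧
      (j.val : ℝ)/n < Equitize.sQ Q w ∧ Equitize.sQ Q w < ((j.val : ℝ)+1)/n := by
    intro j hbad
    have hab : (j.val : ℝ)/n < ((j.val : ℝ)+1)/n := (div_lt_div_iff_of_pos_right hnR).2 (by linarith)
    have hb1 : ((j.val : ℝ)+1)/n ≤ 1 := by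
      rw [div_le_one hnR]
      exact_mod_cast j.isLt
    have ha0 : (0:ℝ) ≤ (j.val : ℝ)/n := by positivity
    set T : Finset ℕ := (Finset.range (k+1)).filter (fun i => Equitize.sQ Q i ≤ (j.val : ℝ)/n)
      with hT
    have h0T : 0 ∈ T := by
      refine Finset.mem_filter.2 ⟨Finset.mem_range.2 (by omega), ?_⟩
      have h0 : Equitize.sQ Q 0 = 0 := by simp [Equitize.sQ]
      rw [h0]
      exact ha0
    set istar := T.max' ⟨0, h0T⟩ with histardef
    have histarT : istar ∈ T := T.max'_mem _
    have histark : istar ≤ k := by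
      have := (Finset.mem_filter.1 histarT).1
      rw [Finset.mem_range] at this
      omega
    have hsistar : Equitize.sQ Q istar ≤ (j.val : ℝ)/n := (Finset.mem_filter.1 histarT).2
    have histarlt : istar < k := by
      rcases Nat.lt_or_ge istar k with h|h
      · exact h
      · exfalso
        have heq : istar = k := by omega
        rw [heq, Equitize.sQ_total hS] at hsistar
        linarith
    have hnext : (j.val : ℝ)/n < Equitize.sQ Q (istar+1) := by
      by_contra hcon
      push_neg at hcon
      have hmem : istar + 1 ∈ T :=
        Finset.mem_filter.2 ⟨Finset.mem_range.2 (by omega), hcon⟩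
      have := Finset.le_max' T _ hmem
      omega
    have hnextb : Equitize.sQ Q (istar+1) < ((j.val : ℝ)+1)/n := by
      by_contra hcon
      push_neg at hcon
      exact hbad ⟨⟨istar, histarlt⟩, fun t ht => ⟨le_trans hsistar ht.1, le_trans ht.2 hcon⟩⟩
    exact ⟨istar+1, ⟨by omega, by omega⟩, hnext, hnextb⟩
  set wfun : Fin n → ℕ := fun j => if h : ¬ good j then (hwit j h).choose else 0 with hwfun
  have hwspec : ∀ j : Fin n, ¬ good j → (1 ≤ wfun j ∧ wfun j ≤ k) ∧
      (j.val : ℝ)/n < Equitize.sQ Q (wfun j) ∧ Equitize.sQ Q (wfun j) < ((j.val : ℝ)+1)/n := by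
    intro j h
    rw [hwfun]
    simp only [dif_pos h]
    exact (hwit j h).choose_spec
  have hbadcard : badF.card ≤ k := by
    have hle : badF.card ≤ (Finset.Icc 1 k).card := by
      apply Finset.card_le_card_of_injOn wfun
      · intro j hj
        have h := hwspec j (Finset.mem_filter.1 hj).2
        exact Finset.mem_Icc.2 ⟨h.1.1, h.1.2⟩
      · intro j hj j' hj' heq
        have h1 := hwspec j (Finset.mem_filter.1 (Finset.mem_coe.1 hj)).2
        have h2 := hwspec j' (Finset.mem_filter.1 (Finset.mem_coe.1 hj')).2
        rw [heq] at h1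
        by_contra hne
        rcases Nat.lt_or_ge j.val j'.val with h|h
        · have hcast : (j.val : ℝ)+1 ≤ (j'.val : ℝ) := by exact_mod_cast h
          have hd : ((j.val : ℝ)+1)/n ≤ (j'.val : ℝ)/n := by gcongr
          linarith [h1.2.2, h2.2.1]
        · have h' : j'.val < j.val := by
            rcases Nat.lt_or_ge j'.val j.val with hx|hx
            · exact hx
            · exact absurd (Fin.ext (le_antisymm hx h)) hne
          have hcast : (j'.val : ℝ)+1 ≤ (j.val : ℝ) := by exact_mod_cast h'
          have hd : ((j'.val : ℝ)+1)/n ≤ (j.val : ℝ)/n := by gcongr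
          linarith [h2.2.2, h1.2.1]
    calc badF.card ≤ (Finset.Icc 1 k).card := hle
      _ = k := by rw [Nat.card_Icc]; omega
  set BadSet : Set ℝ := ⋃ j ∈ badF, E j with hBadSet
  have hBadMeas : MeasurableSet BadSet :=
    MeasurableSet.biUnion (Finset.countable_toSet _) (fun j _ => hEmeas j)
  have hBadVol : volume BadSet ≤ (k : ℝ≥0∞) * (n : ℝ≥0∞)⁻¹ := by
    calc volume BadSet ≤ ∑ j ∈ badF, volume (E j) := measure_biUnion_finset_le _ _
      _ = ∑ _j ∈ badF, (n : ℝ≥0∞)⁻¹ := Finset.sum_congr rfl (fun j _ => hEvol j)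
      _ = (badF.card : ℝ≥0∞) * (n : ℝ≥0∞)⁻¹ := by rw [Finset.sum_const, nsmul_eq_mul]
      _ ≤ (k : ℝ≥0∞) * (n : ℝ≥0∞)⁻¹ :=
          mul_le_mul_left (by exact_mod_cast hbadcard) _
  set Nset : Set ℝ := ⋃ i ∈ Finset.range (k+1), {t ∈ I | g t = Equitize.sQ Q i} with hNset
  have hNmeas : MeasurableSet Nset :=
    MeasurableSet.biUnion (Finset.countable_toSet _)
      (fun i _ => measurableSet_Icc.inter (measurableSet_eq_fun hgmeas measurable_const))
  have hNnull : volume Nset = 0 := by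
    refine le_antisymm ?_ zero_le
    calc volume Nset ≤ ∑ i ∈ Finset.range (k+1), volume {t ∈ I | g t = Equitize.sQ Q i} :=
          measure_biUnion_finset_le _ _
      _ = 0 := by
          apply Finset.sum_eq_zero
          intro i hi
          apply Equitize.lem_atom hS (Equitize.sQ_nonneg i)
          have hik : i ≤ k := Nat.lt_succ_iff.1 (Finset.mem_range.1 hi)
          have := Equitize.sQ_mono (Q := Q) hik
          rw [Equitize.sQ_total hS] at this
          exact this
  set Cube : Set (Fin p → ℝ) := Set.univ.pi (fun _ : Fin p => I) with hCube
  have hCubeMeas : MeasurableSet Cube := MeasurableSet.univ_pi (fun _ => measurableSet_Icc)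
  have hCubeVol : volume Cube = 1 := by
    rw [hCube, volume_pi_pi]
    simp [hI, Real.volume_Icc]
  have hRect : ∀ (B : Set ℝ), MeasurableSet B → ∀ l : Fin p,
      volume ((fun x : Fin p → ℝ => x l) ⁻¹' B ∩ Cube) ≤ volume B := by
    intro B hB l
    have hsub : (fun x : Fin p → ℝ => x l) ⁻¹' B ∩ Cube ⊆
        Set.univ.pi (Function.update (fun _ : Fin p => I) l B) := by
      rintro x ⟨hxB, hxC⟩
      intro l' _
      by_cases hll : l' = l
      · subst hll
        rw [Function.update_self]
        exact hxB
      · rw [Function.update_of_ne hll]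
        exact hxC l' (Set.mem_univ _)
    have hupdate : (fun l' => volume (Function.update (fun _ : Fin p => I) l B l')) =
        Function.update (fun _ : Fin p => volume I) l (volume B) := by
      funext l'
      by_cases hll : l' = l
      · subst hll; simp
      · rw [Function.update_of_ne hll, Function.update_of_ne hll]
    calc volume ((fun x : Fin p → ℝ => x l) ⁻¹' B ∩ Cube)
        ≤ volume (Set.univ.pi (Function.update (fun _ : Fin p => I) l B)) := measure_mono hsub
      _ = ∏ l', volume (Function.update (fun _ : Fin p => I) l B l') := volume_pi_pi _
      _ = volume B := by
          rw [show (∏ l', volume (Function.update (fun _ : Fin p => I) l B l')) =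
              ∏ l', Function.update (fun _ : Fin p => volume I) l (volume B) l' by rw [hupdate]]
          rw [Finset.prod_update_of_mem (Finset.mem_univ l)]
          have : volume I = 1 := by simp [hI, Real.volume_Icc]
          simp [this]
  set Dset : Set (Fin p → ℝ) := ⋃ l : Fin p, (fun x => x l) ⁻¹' BadSet with hDset
  have hDmeas : MeasurableSet Dset :=
    MeasurableSet.iUnion (fun l => hBadMeas.preimage (measurable_pi_apply l))
  have hDvol : volume (Dset ∩ Cube) ≤ (p : ℝ≥0∞) * ((k : ℝ≥0∞) * (n : ℝ≥0∞)⁻¹) := by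
    rw [hDset, Set.iUnion_inter]
    calc volume (⋃ l, (fun x : Fin p → ℝ => x l) ⁻¹' BadSet ∩ Cube)
        ≤ ∑ l : Fin p, volume ((fun x : Fin p → ℝ => x l) ⁻¹' BadSet ∩ Cube) :=
          measure_iUnion_fintype_le _ _
      _ ≤ ∑ _l : Fin p, ((k : ℝ≥0∞) * (n : ℝ≥0∞)⁻¹) :=
          Finset.sum_le_sum (fun l _ => le_trans (hRect BadSet hBadMeas l) hBadVol)
      _ = (p : ℝ≥0∞) * ((k : ℝ≥0∞) * (n : ℝ≥0∞)⁻¹) := by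
          rw [Finset.sum_const, nsmul_eq_mul]
          simp
  set DN : Set (Fin p → ℝ) := ⋃ l : Fin p, (fun x => x l) ⁻¹' Nset with hDN
  have hDNnull : volume (DN ∩ Cube) = 0 := by
    refine le_antisymm ?_ zero_le
    rw [hDN, Set.iUnion_inter]
    calc volume (⋃ l, (fun x : Fin p → ℝ => x l) ⁻¹' Nset ∩ Cube)
        ≤ ∑ l : Fin p, volume ((fun x : Fin p → ℝ => x l) ⁻¹' Nset ∩ Cube) :=
          measure_iUnion_fintype_le _ _
      _ ≤ ∑ _l : Fin p, volume Nset := Finset.sum_le_sum (fun l _ => hRect Nset hNmeas l)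
      _ = 0 := by rw [hNnull]; simp
  set μc := volume.restrict Cube with hμc
  haveI : IsFiniteMeasure μc := by
    constructor
    rw [hμc, Measure.restrict_apply_univ, hCubeVol]
    exact ENNReal.one_lt_top
  set h : (Fin p → ℝ) → ℝ := fun x => ∑ i, |F x i - F' x i| with hh
  set g0 : (Fin p → ℝ) → ℝ := Set.indicator Dset (fun _ => C) with hg0
  have hg0nonneg : ∀ x, 0 ≤ g0 x := fun x => Set.indicator_nonneg (fun _ _ => hC0) x
  have hhnonneg : ∀ x, 0 ≤ h x := fun x => Finset.sum_nonneg (fun i _ => abs_nonneg _)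
  have hPdisj : ∀ a b : Fin k, a ≠ b → Disjoint (P a) (P b) := fun a b hab => hP.2.1 hab
  have hEdisj2 : ∀ a b : Fin n, a ≠ b → Disjoint (E a) (E b) := fun a b hab => hEdisj hab
  have hclaim : ∀ x, x ∈ Cube → x ∉ DN → h x ≤ g0 x := by
    intro x hxC hxDN
    have hxI : ∀ l, x l ∈ I := fun l => hxC l (Set.mem_univ l)
    have hxE : ∀ l, ∃ j, x l ∈ E j := by
      intro l
      have hmem : x l ∈ ⋃ j, E j := hEcover ▸ hxI l
      exact Set.mem_iUnion.1 hmem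
    choose J hJ using hxE
    have hxP : ∀ l, ∃ i : Fin k, x l ∈ P i := by
      intro l
      obtain ⟨i, hi, hQi⟩ := Equitize.exists_mem hS (hxI l)
      exact ⟨⟨i, hi⟩, by rw [← hQP ⟨i, hi⟩]; exact hQi⟩
    choose Ip hIp using hxP
    have hFx : F x = c Ip := by
      rw [hc x]; exact Equitize.eval_step P hPdisj c x Ip hIp
    have hF'x : F' x = c' J := Equitize.eval_step E hEdisj2 c' x J hJ
    by_cases hgd : ∀ l, good (J l)
    · have hkey : ∀ l, Ip l = iMap (J l) := by
        intro l
        have hspec := hiMapSpec (J l) (hgd l)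
        have hgmemx := hEmem (J l) (x l) (hJ l)
        have hgx : g (x l) ∈
            Set.Icc (Equitize.sQ Q (iMap (J l)).val) (Equitize.sQ Q ((iMap (J l)).val + 1)) :=
          hspec ⟨hgmemx.1, hgmemx.2⟩
        have hne : ∀ i : ℕ, i ≤ k → g (x l) ≠ Equitize.sQ Q i := by
          intro i hik hcon
          apply hxDN
          refine Set.mem_iUnion.2 ⟨l, ?_⟩
          show x l ∈ Nset
          exact Set.mem_biUnion (Finset.mem_range.2 (by omega)) ⟨hxI l, hcon⟩
        have hlt1 : Equitize.sQ Q (iMap (J l)).val < g (x l) :=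
          lt_of_le_of_ne hgx.1 (Ne.symm (hne _ (le_of_lt (iMap (J l)).isLt)))
        have hlt2 : g (x l) < Equitize.sQ Q ((iMap (J l)).val + 1) :=
          lt_of_le_of_ne hgx.2 (hne _ (by have := (iMap (J l)).isLt; omega))
        have hxQ : x l ∈ Q (Ip l).val := by rw [hQP]; exact hIp l
        have hgx2 := Equitize.gQ_mem hS (Ip l).isLt hxQ
        by_contra hnee
        rcases Nat.lt_or_ge (Ip l).val (iMap (J l)).val with hcmp|hcmp
        · have hmono : Equitize.sQ Q ((Ip l).val + 1) ≤ Equitize.sQ Q (iMap (J l)).val :=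
            Equitize.sQ_mono hcmp
          linarith [hgx2.2]
        · have hcmp' : (iMap (J l)).val < (Ip l).val := by
            rcases Nat.lt_or_ge (iMap (J l)).val (Ip l).val with hx|hx
            · exact hx
            · exact absurd (Fin.ext (le_antisymm hx hcmp)) hnee
          have hmono : Equitize.sQ Q ((iMap (J l)).val + 1) ≤ Equitize.sQ Q (Ip l).val :=
            Equitize.sQ_mono hcmp'
          linarith [hgx2.1]
      have heqF : F' x = F x := by
        rw [hFx, hF'x, hc']
        simp only [if_pos hgd]
        have harg : (fun l => iMap (J l)) = Ip := funext fun l => (hkey l).symm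
        rw [harg]
      calc h x = ∑ i, |F x i - F' x i| := rfl
        _ = 0 := by rw [heqF]; simp
        _ ≤ g0 x := hg0nonneg x
    · push_neg at hgd
      obtain ⟨l0, hl0⟩ := hgd
      have hF'0 : F' x = 0 := by
        rw [hF'x, hc']
        simp only [ite_eq_right_iff]
        intro hcon
        exact absurd (hcon l0) hl0
      have hxD : x ∈ Dset := by
        refine Set.mem_iUnion.2 ⟨l0, ?_⟩
        show x l0 ∈ BadSet
        exact Set.mem_biUnion (Finset.mem_filter.2 ⟨Finset.mem_univ _, hl0⟩) (hJ l0)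
      calc h x = ∑ i, |F x i - F' x i| := rfl
        _ = ∑ i, |F x i| := by rw [hF'0]; simp
        _ ≤ C := hC x
        _ = g0 x := (Set.indicator_of_mem hxD (fun _ => C)).symm
  have hFm : ∀ i : Fin d, Measurable (fun x => F x i) := by
    intro i
    have hrw : (fun x => F x i) = fun x =>
        (∑ j : Fin p → Fin k, (∏ l, Set.indicator (P (j l)) (fun _ => (1:ℝ)) (x l)) • c j) i := by
      funext x; rw [hc x]
    rw [hrw]
    exact Equitize.meas_coord P hP.1 c i
  have hF'm : ∀ i : Fin d, Measurable (fun x => F' x i) := by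
    intro i
    exact Equitize.meas_coord E hEmeas c' i
  have hhm : Measurable h := by
    apply Finset.measurable_sum
    intro i _
    exact ((hFm i).sub (hF'm i)).abs
  have hae : ∀ᵐ x ∂μc, h x ≤ g0 x := by
    rw [ae_iff, hμc, Measure.restrict_apply' hCubeMeas]
    refine measure_mono_null ?_ hDNnull
    rintro x ⟨hx1, hx2⟩
    refine ⟨?_, hx2⟩
    by_contra hnotDN
    exact hx1 (hclaim x hx2 hnotDN)
  have hg0int : Integrable g0 μc := (integrable_const C).indicator hDmeas
  have hhint : Integrable h μc := by
    apply Integrable.mono' hg0int hhm.aestronglyMeasurable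
    filter_upwards [hae] with x hx
    rw [Real.norm_of_nonneg (hhnonneg x)]
    exact hx
  have htoReal : (μc Dset).toReal ≤ (p : ℝ) * ((k : ℝ) / n) := by
    have hμcD : μc Dset ≤ (p : ℝ≥0∞) * ((k : ℝ≥0∞) * (n : ℝ≥0∞)⁻¹) := by
      rw [hμc, Measure.restrict_apply' hCubeMeas]
      exact hDvol
    have hne : ((p : ℝ≥0∞) * ((k : ℝ≥0∞) * (n : ℝ≥0∞)⁻¹)) ≠ ⊤ := by
      apply ENNReal.mul_ne_top (ENNReal.natCast_ne_top p)
      apply ENNReal.mul_ne_top (ENNReal.natCast_ne_top k)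
      exact ENNReal.inv_ne_top.2 (by simp [hn.ne'])
    have hmono := ENNReal.toReal_mono hne hμcD
    rw [ENNReal.toReal_mul, ENNReal.toReal_mul, ENNReal.toReal_natCast, ENNReal.toReal_natCast,
      ENNReal.toReal_inv, ENNReal.toReal_natCast] at hmono
    calc (μc Dset).toReal ≤ (p : ℝ) * ((k : ℝ) * ((n : ℝ))⁻¹) := hmono
      _ = (p : ℝ) * ((k : ℝ) / n) := by ring
  calc (∫ x in Cube, h x) = ∫ x, h x ∂μc := rfl
    _ ≤ ∫ x, g0 x ∂μc := integral_mono_ae hhint hg0int hae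
    _ = (μc Dset).toReal * C := by
        rw [hg0, integral_indicator hDmeas, setIntegral_const, smul_eq_mul]
        rfl
    _ ≤ ((p : ℝ) * ((k : ℝ) / n)) * C := mul_le_mul_of_nonneg_right htoReal hC0
    _ = (p : ℝ) * C * ((k : ℝ) / n) := by ring
end

section
/- Let K₁, K₂, … be arbitrary nonempty subsets of a real Hilbert space H. For every ε > 0 and v ∈ H, there exists m ≤ ⌈1/ε²⌉, elements vᵢ ∈ Kᵢ and scalars γᵢ ∈ ℝ for i ∈ [m], such that for every w ∈ K_{m+1}: |⟨w, v − Σ_{i=1}^m γᵢ vᵢ⟩| ≤ ε ‖w‖ ‖v‖. -/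
open scoped RealInnerProductSpace

theorem weak_regularity_hilbert {H : Type*} [NormedAddCommGroup H]
    [InnerProductSpace ℝ H] (K : ℕ → Set H) (hK : ∀ i, (K i).Nonempty)
    (ε : ℝ) (hε : 0 < ε) (v : H) :
    ∃ m : ℕ, m ≤ ⌈1 / ε ^ 2⌉₊ ∧
      ∃ (vi : Fin m → H) (γ : Fin m → ℝ), (∀ i : Fin m, vi i ∈ K i) ∧
        ∀ w ∈ K m, |⟪w, v - ∑ i, γ i • vi i⟫| ≤ ε * ‖w‖ * ‖v‖ := by
  by_cases hv : v = 0
  · refine ⟨0, Nat.zero_le _, ![], ![], by simp, ?_⟩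
    intro w _
    simp [hv]
  have hv2 : 0 < ‖v‖ ^ 2 := pow_pos (norm_pos_iff.mpr hv) 2
  set B := ⌈1 / ε ^ 2⌉₊ with hB
  have hBge : (1 / ε ^ 2 : ℝ) ≤ B := Nat.le_ceil _
  suffices h : ∀ k m (vi : Fin m → H) (γ : Fin m → ℝ), (∀ i : Fin m, vi i ∈ K i) →
      ‖v - ∑ i, γ i • vi i‖ ^ 2 ≤ ‖v‖ ^ 2 - m * (ε ^ 2 * ‖v‖ ^ 2) →
      B ≤ m + k → m ≤ B →
      ∃ m' : ℕ, m' ≤ B ∧ ∃ (vi' : Fin m' → H) (γ' : Fin m' → ℝ),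
        (∀ i : Fin m', vi' i ∈ K i) ∧
        ∀ w ∈ K m', |⟪w, v - ∑ i, γ' i • vi' i⟫| ≤ ε * ‖w‖ * ‖v‖ by
    exact h B 0 ![] ![] (fun i => i.elim0) (by simp) (by omega) (Nat.zero_le _)
  intro k
  induction k with
  | zero =>
    intro m vi γ hmem hen hle _
    have hm : (1 : ℝ) ≤ m * ε ^ 2 := by
      have h0 : (B : ℝ) ≤ m := by exact_mod_cast by omega
      have h1 : (1 / ε ^ 2 : ℝ) ≤ m := hBge.trans h0
      rw [div_le_iff₀ (by positivity)] at h1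
      linarith
    have hr : ‖v - ∑ i, γ i • vi i‖ ^ 2 ≤ 0 := by nlinarith
    have hr0 : v - ∑ i, γ i • vi i = 0 := by
      have h2 := sq_nonneg ‖v - ∑ i, γ i • vi i‖
      have h3 : ‖v - ∑ i, γ i • vi i‖ = 0 := by nlinarith
      simpa using h3
    refine ⟨m, by omega, vi, γ, hmem, ?_⟩
    intro w _
    rw [hr0]
    simpa using mul_nonneg (mul_nonneg hε.le (norm_nonneg w)) (norm_nonneg v)
  | succ k ih =>
    intro m vi γ hmem hen hle hmB
    by_cases hbad : ∃ w ∈ K m, ε * ‖w‖ * ‖v‖ < |⟪w, v - ∑ i, γ i • vi i⟫|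
    · obtain ⟨w, hwK, hw⟩ := hbad
      set r := v - ∑ i, γ i • vi i with hr
      have hwne : w ≠ 0 := by
        rintro rfl
        simp at hw
      have hw2 : 0 < ‖w‖ ^ 2 := pow_pos (norm_pos_iff.mpr hwne) 2
      set d := ⟪w, r⟫ with hd
      set c := d / ‖w‖ ^ 2 with hc
      have hdsq : ε ^ 2 * ‖w‖ ^ 2 * ‖v‖ ^ 2 < d ^ 2 := by
        have h1 : 0 ≤ ε * ‖w‖ * ‖v‖ := by positivity
        nlinarith [abs_nonneg d, sq_abs d, hw]
      have hnew : ‖r - c • w‖ ^ 2 = ‖r‖ ^ 2 - d ^ 2 / ‖w‖ ^ 2 := by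
        rw [norm_sub_sq_real, real_inner_smul_right, real_inner_comm, norm_smul,
          mul_pow, Real.norm_eq_abs, sq_abs, ← hd, hc]
        field_simp
        ring
      have hdec : ε ^ 2 * ‖v‖ ^ 2 < d ^ 2 / ‖w‖ ^ 2 := by
        rw [lt_div_iff₀ hw2]
        nlinarith
      have hen' : ‖r - c • w‖ ^ 2 ≤ ‖v‖ ^ 2 - ((m : ℝ) + 1) * (ε ^ 2 * ‖v‖ ^ 2) := by
        rw [hnew]
        nlinarith
      have hstrict : ((m : ℝ) + 1) * (ε ^ 2 * ‖v‖ ^ 2) ≤ ‖v‖ ^ 2 := by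
        have := sq_nonneg ‖r - c • w‖
        linarith
      have hm1B : m + 1 ≤ B := by
        have h1 : ((m : ℝ) + 1) * ε ^ 2 ≤ 1 := by
          have h0 : (((m : ℝ) + 1) * ε ^ 2) * ‖v‖ ^ 2 ≤ 1 * ‖v‖ ^ 2 := by
            rw [one_mul]; linarith [hstrict]
          exact le_of_mul_le_mul_right h0 hv2
        have h2 : ((m : ℝ) + 1) ≤ 1 / ε ^ 2 := by
          rw [le_div_iff₀ (by positivity)]
          linarith
        have h3 : ((m : ℝ) + 1) ≤ B := h2.trans hBge
        exact_mod_cast h3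
      have hsum : ∑ i : Fin (m + 1), (Fin.snoc γ c : Fin (m + 1) → ℝ) i •
          (Fin.snoc vi w : Fin (m + 1) → H) i = (∑ i, γ i • vi i) + c • w := by
        rw [Fin.sum_univ_castSucc]
        simp
      refine ih (m + 1) (Fin.snoc vi w) (Fin.snoc γ c) ?_ ?_ (by omega) hm1B
      · intro i
        refine Fin.lastCases ?_ ?_ i
        · simpa using hwK
        · intro j
          simpa using hmem j
      · rw [hsum]
        have hres : v - ((∑ i, γ i • vi i) + c • w) = r - c • w := by
          rw [hr]; abel
        rw [hres]
        push_cast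
        exact hen'
    · push_neg at hbad
      exact ⟨m, hmB, vi, γ, hmem, hbad⟩
end

section
/- Let f : [0,1] → ℝ be measurable with |f| ≤ r a.e., and W, V : [0,1]² → [−1,1] kernels. Then ‖Agg(W,f) − Agg(V,f)‖_□ ≤ 2r ‖W − V‖_□, where Agg(W,f)(x) = ∫₀¹ W(x,y) f(y) dy, ‖h‖_□ = sup_{S} |∫_S h| for h : [0,1] → ℝ, and ‖U‖_□ = sup_{S,T} |∫_{S×T} U|. Moreover, if f ≥ 0 a.e., then the bound improves to r ‖W − V‖_□. -/
open MeasureTheory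

/-- The cut norm of a one-variable function on `[0,1]`. -/
noncomputable def sigCutNorm1 (h : ℝ → ℝ) : ℝ :=
  ⨆ S : {S : Set ℝ // MeasurableSet S ∧ S ⊆ Set.Icc 0 1}, |∫ x in S.1, h x|

/-- The cut norm of a two-variable kernel on `[0,1]²`. -/
noncomputable def kernelCutNorm (U : ℝ → ℝ → ℝ) : ℝ :=
  ⨆ S : {S : Set ℝ // MeasurableSet S ∧ S ⊆ Set.Icc 0 1},
    ⨆ T : {T : Set ℝ // MeasurableSet T ∧ T ⊆ Set.Icc 0 1},
      |∫ x in S.1, ∫ y in T.1, U x y|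

private lemma finite_restrict_of_subset {A : Set ℝ} (hA : A ⊆ Set.Icc 0 1) :
    IsFiniteMeasure (volume.restrict A) := by
  constructor
  rw [Measure.restrict_apply_univ]
  exact lt_of_le_of_lt (measure_mono hA) (by simp [Real.volume_Icc])

private lemma vol_toReal_le {A : Set ℝ} (hA : A ⊆ Set.Icc 0 1) :
    (volume A).toReal ≤ 1 := by
  have h1 : volume A ≤ 1 := by
    calc volume A ≤ volume (Set.Icc (0:ℝ) 1) := measure_mono hA
    _ = 1 := by simp [Real.volume_Icc]
  exact ENNReal.toReal_le_of_le_ofReal zero_le_one (by simpa using h1)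

private lemma abs_setIntegral_le {A : Set ℝ} (hA : A ⊆ Set.Icc 0 1) {h : ℝ → ℝ} {c : ℝ}
    (hc : 0 ≤ c) (hb : ∀ x, |h x| ≤ c) : |∫ x in A, h x| ≤ c := by
  haveI := finite_restrict_of_subset hA
  rw [← Real.norm_eq_abs]
  calc ‖∫ x in A, h x‖ ≤ c * ((volume.restrict A) Set.univ).toReal :=
        norm_integral_le_of_norm_le_const (ae_of_all _ fun x => by
          rw [Real.norm_eq_abs]; exact hb x)
    _ ≤ c * 1 := by
        apply mul_le_mul_of_nonneg_left _ hc
        rw [Measure.restrict_apply_univ]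
        exact vol_toReal_le hA
    _ = c := mul_one c

private lemma main_bound (r : ℝ) (hr : 0 ≤ r) (f : ℝ → ℝ) (hf : Measurable f)
    (hfr : ∀ᵐ x ∂(volume.restrict (Set.Icc (0:ℝ) 1)), |f x| ≤ r)
    (U : ℝ → ℝ → ℝ) (hU : Measurable (Function.uncurry U))
    (hUb : ∀ x y, |U x y| ≤ 2)
    (S : Set ℝ) (hS : MeasurableSet S) (hSI : S ⊆ Set.Icc 0 1) :
    |∫ x in S, ∫ y in Set.Icc (0:ℝ) 1, U x y * f y| ≤ 2 * r * kernelCutNorm U ∧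
    ((∀ᵐ y ∂(volume.restrict (Set.Icc (0:ℝ) 1)), 0 ≤ f y) →
      |∫ x in S, ∫ y in Set.Icc (0:ℝ) 1, U x y * f y| ≤ r * kernelCutNorm U) := by
  set I : Set ℝ := Set.Icc 0 1 with hI
  have hImeas : MeasurableSet I := measurableSet_Icc
  haveI hνfin : IsFiniteMeasure (volume.restrict I) := finite_restrict_of_subset le_rfl
  haveI hμSfin : IsFiniteMeasure (volume.restrict S) := finite_restrict_of_subset hSI
  set K : ℝ := kernelCutNorm U with hK
  haveI : Nonempty {S : Set ℝ // MeasurableSet S ∧ S ⊆ Set.Icc 0 1} :=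
    ⟨⟨∅, MeasurableSet.empty, Set.empty_subset _⟩⟩
  -- boundedness of the sups
  have hval2 : ∀ (A B : {S : Set ℝ // MeasurableSet S ∧ S ⊆ Set.Icc 0 1}),
      |∫ x in A.1, ∫ y in B.1, U x y| ≤ 2 := by
    intro A B
    refine abs_setIntegral_le A.2.2 (by norm_num) (fun x => ?_)
    exact abs_setIntegral_le B.2.2 (by norm_num) (fun y => hUb x y)
  have hbdd1 : ∀ A : {S : Set ℝ // MeasurableSet S ∧ S ⊆ Set.Icc 0 1},
      BddAbove (Set.range fun B : {S : Set ℝ // MeasurableSet S ∧ S ⊆ Set.Icc 0 1} =>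
        |∫ x in A.1, ∫ y in B.1, U x y|) :=
    fun A => ⟨2, by rintro _ ⟨B, rfl⟩; exact hval2 A B⟩
  have hbdd2 : BddAbove (Set.range fun A : {S : Set ℝ // MeasurableSet S ∧ S ⊆ Set.Icc 0 1} =>
      ⨆ B : {S : Set ℝ // MeasurableSet S ∧ S ⊆ Set.Icc 0 1}, |∫ x in A.1, ∫ y in B.1, U x y|) :=
    ⟨2, by rintro _ ⟨A, rfl⟩; exact ciSup_le (fun B => hval2 A B)⟩
  have hKmem : ∀ {A B : Set ℝ}, MeasurableSet A → A ⊆ Set.Icc 0 1 → MeasurableSet B →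
      B ⊆ Set.Icc 0 1 → |∫ x in A, ∫ y in B, U x y| ≤ K := by
    intro A B hA hAI hB hBI
    calc |∫ x in A, ∫ y in B, U x y|
        ≤ ⨆ T : {S : Set ℝ // MeasurableSet S ∧ S ⊆ Set.Icc 0 1},
            |∫ x in A, ∫ y in T.1, U x y| := le_ciSup (hbdd1 ⟨A, hA, hAI⟩) ⟨B, hB, hBI⟩
      _ ≤ K := le_ciSup hbdd2 ⟨A, hA, hAI⟩
  have hK0 : 0 ≤ K := le_trans (abs_nonneg _)
    (hKmem MeasurableSet.empty (Set.empty_subset _) MeasurableSet.empty (Set.empty_subset _))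
  -- integrability of f on I
  have hfi : Integrable f (volume.restrict I) :=
    Integrable.mono' (integrable_const r) hf.aestronglyMeasurable
      (by simpa [Real.norm_eq_abs] using hfr)
  -- the function g
  set g : ℝ → ℝ := fun y => ∫ x in S, U x y with hg
  have hgsm : StronglyMeasurable g := by
    have : StronglyMeasurable fun p : ℝ × ℝ => U p.2 p.1 :=
      (hU.comp measurable_swap).stronglyMeasurable
    exact this.integral_prod_right'
  have hgb : ∀ y, |g y| ≤ 2 := fun y =>
    abs_setIntegral_le hSI (by norm_num) (fun x => hUb x y)
  have hgint : Integrable g (volume.restrict I) :=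
    Integrable.mono' (integrable_const 2) hgsm.aestronglyMeasurable
      (ae_of_all _ fun y => by simpa [Real.norm_eq_abs] using hgb y)
  -- Fubini: swap the integral
  have hprod : Integrable (fun p : ℝ × ℝ => U p.1 p.2 * f p.2)
      ((volume.restrict S).prod (volume.restrict I)) := by
    refine Integrable.mono' (integrable_const (2 * r))
      ((hU.mul (hf.comp measurable_snd)).aestronglyMeasurable) ?_
    filter_upwards [Measure.quasiMeasurePreserving_snd.ae hfr] with p hp
    rw [Real.norm_eq_abs, abs_mul]
    exact mul_le_mul (hUb _ _) hp (abs_nonneg _) (by norm_num)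
  have hswap : ∫ x in S, ∫ y in I, U x y * f y = ∫ y in I, g y * f y := by
    rw [integral_integral_swap hprod]
    refine setIntegral_congr_fun hImeas (fun y _ => ?_)
    exact integral_mul_const (f y) (fun x => U x y)
  -- bound on integrals of g over subsets of I
  have hgT : ∀ {T : Set ℝ}, MeasurableSet T → T ⊆ Set.Icc 0 1 → |∫ y in T, g y| ≤ K := by
    intro T hT hTI
    haveI := finite_restrict_of_subset hTI
    have hswap2 : ∫ y in T, g y = ∫ x in S, ∫ y in T, U x y := by
      have hint : Integrable (fun p : ℝ × ℝ => U p.2 p.1)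
          ((volume.restrict T).prod (volume.restrict S)) := by
        refine Integrable.mono' (integrable_const 2)
          ((hU.comp measurable_swap).aestronglyMeasurable) ?_
        exact ae_of_all _ fun p => by simpa [Real.norm_eq_abs] using hUb p.2 p.1
      exact integral_integral_swap hint
    rw [hswap2]
    exact hKmem hS hSI hT hTI
  -- split I into positive and negative parts of g
  have hgmeas : Measurable g := hgsm.measurable
  set P : Set ℝ := I ∩ {y | 0 ≤ g y} with hP
  set N : Set ℝ := I ∩ {y | g y < 0} with hN
  have hPmeas : MeasurableSet P := hImeas.inter (measurableSet_le measurable_const hgmeas)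
  have hNmeas : MeasurableSet N := hImeas.inter (measurableSet_lt hgmeas measurable_const)
  have hPI : P ⊆ I := Set.inter_subset_left
  have hNI : N ⊆ I := Set.inter_subset_left
  have hdisj : Disjoint P N := by
    refine Set.disjoint_left.mpr fun y hyP hyN => ?_
    have h1 : 0 ≤ g y := hyP.2
    have h2 : g y < 0 := hyN.2
    linarith
  have hunion : I = P ∪ N := by
    ext y
    constructor
    · intro hy
      rcases le_or_gt 0 (g y) with h | h
      · exact Or.inl ⟨hy, h⟩
      · exact Or.inr ⟨hy, h⟩
    · rintro (h | h) <;> exact h.1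
  have hsplit : ∀ {h : ℝ → ℝ}, Integrable h (volume.restrict I) →
      ∫ y in I, h y = (∫ y in P, h y) + ∫ y in N, h y := by
    intro h hint
    have h0 : ∫ y in P ∪ N, h y = (∫ y in P, h y) + ∫ y in N, h y :=
      setIntegral_union hdisj hNmeas
        (hint.mono_measure (Measure.restrict_mono hPI le_rfl))
        (hint.mono_measure (Measure.restrict_mono hNI le_rfl))
    rw [← hunion] at h0
    exact h0
  -- integrability of g * f
  have hgfint : Integrable (fun y => g y * f y) (volume.restrict I) :=
    Integrable.bdd_mul hfi hgsm.aestronglyMeasurable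
      (c := 2) (ae_of_all _ fun y => by simpa [Real.norm_eq_abs] using hgb y)
  -- bounds on ∫_P g and ∫_N g
  have hPg : |∫ y in P, g y| ≤ K := hgT hPmeas (hPI.trans le_rfl)
  have hNg : |∫ y in N, g y| ≤ K := hgT hNmeas (hNI.trans le_rfl)
  constructor
  · -- general bound
    rw [hswap]
    have h1 : |∫ y in I, g y * f y| ≤ ∫ y in I, |g y * f y| := by
      simpa only [Real.norm_eq_abs] using norm_integral_le_integral_norm (fun y => g y * f y)
        (μ := volume.restrict I)
    have h2 : ∫ y in I, |g y * f y| ≤ ∫ y in I, r * |g y| := by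
      refine integral_mono_ae hgfint.abs ((hgint.abs).const_mul r) ?_
      filter_upwards [hfr] with y hy
      rw [abs_mul, mul_comm]
      exact mul_le_mul_of_nonneg_right hy (abs_nonneg _)
    have h3 : ∫ y in I, r * |g y| = r * ∫ y in I, |g y| := integral_const_mul r _
    have h4 : ∫ y in I, |g y| = (∫ y in P, |g y|) + ∫ y in N, |g y| := hsplit hgint.abs
    have h5 : ∫ y in P, |g y| = ∫ y in P, g y :=
      setIntegral_congr_fun hPmeas (fun y hy => abs_of_nonneg hy.2)
    have h6 : ∫ y in N, |g y| = -∫ y in N, g y := by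
      rw [show ∫ y in N, |g y| = ∫ y in N, -g y from
        setIntegral_congr_fun hNmeas (fun y hy => abs_of_neg hy.2), integral_neg]
    have h7 : ∫ y in I, |g y| ≤ K + K := by
      rw [h4, h5, h6]
      have := abs_le.mp hPg
      have := abs_le.mp hNg
      linarith
    calc |∫ y in I, g y * f y| ≤ r * ∫ y in I, |g y| := by linarith [h1, h2, h3.symm ▸ h2]
      _ ≤ r * (K + K) := mul_le_mul_of_nonneg_left h7 hr
      _ = 2 * r * K := by ring
  · -- nonnegative case
    intro hf0
    rw [hswap]
    have hsplitgf := hsplit hgfint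
    -- integrability on P and N
    have hgfP : Integrable (fun y => g y * f y) (volume.restrict P) :=
      hgfint.mono_measure (Measure.restrict_mono hPI le_rfl)
    have hgfN : Integrable (fun y => g y * f y) (volume.restrict N) :=
      hgfint.mono_measure (Measure.restrict_mono hNI le_rfl)
    have hgP : Integrable g (volume.restrict P) :=
      hgint.mono_measure (Measure.restrict_mono hPI le_rfl)
    have hgN : Integrable g (volume.restrict N) :=
      hgint.mono_measure (Measure.restrict_mono hNI le_rfl)
    have hfrP : ∀ᵐ y ∂(volume.restrict P), |f y| ≤ r :=
      ae_mono (Measure.restrict_mono hPI le_rfl) hfr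
    have hfrN : ∀ᵐ y ∂(volume.restrict N), |f y| ≤ r :=
      ae_mono (Measure.restrict_mono hNI le_rfl) hfr
    have hf0P : ∀ᵐ y ∂(volume.restrict P), 0 ≤ f y :=
      ae_mono (Measure.restrict_mono hPI le_rfl) hf0
    have hf0N : ∀ᵐ y ∂(volume.restrict N), 0 ≤ f y :=
      ae_mono (Measure.restrict_mono hNI le_rfl) hf0
    have hup : ∫ y in I, g y * f y ≤ r * K := by
      have hP1 : ∫ y in P, g y * f y ≤ ∫ y in P, g y * r := by
        refine integral_mono_ae hgfP (hgP.mul_const r) ?_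
        filter_upwards [ae_restrict_mem hPmeas, hfrP] with y hyP hyr
        exact mul_le_mul_of_nonneg_left ((abs_le.mp hyr).2) hyP.2
      have hP2 : ∫ y in P, g y * r = (∫ y in P, g y) * r := integral_mul_const r g
      have hN1 : ∫ y in N, g y * f y ≤ 0 := by
        refine integral_nonpos_of_ae ?_
        filter_upwards [ae_restrict_mem hNmeas, hf0N] with y hyN hyf
        exact mul_nonpos_iff.mpr (Or.inr ⟨le_of_lt hyN.2, hyf⟩)
      have : (∫ y in P, g y) * r ≤ K * r :=
        mul_le_mul_of_nonneg_right ((abs_le.mp hPg).2) hr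
      rw [hsplitgf]
      nlinarith
    have hlo : -(r * K) ≤ ∫ y in I, g y * f y := by
      have hP1 : 0 ≤ ∫ y in P, g y * f y := by
        refine integral_nonneg_of_ae ?_
        filter_upwards [ae_restrict_mem hPmeas, hf0P] with y hyP hyf
        exact mul_nonneg hyP.2 hyf
      have hN1 : ∫ y in N, g y * r ≤ ∫ y in N, g y * f y := by
        refine integral_mono_ae (hgN.mul_const r) hgfN ?_
        filter_upwards [ae_restrict_mem hNmeas, hfrN] with y hyN hyr
        exact mul_le_mul_of_nonpos_left ((abs_le.mp hyr).2) (le_of_lt hyN.2)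
      have hN2 : ∫ y in N, g y * r = (∫ y in N, g y) * r := integral_mul_const r g
      have : -K * r ≤ (∫ y in N, g y) * r :=
        mul_le_mul_of_nonneg_right ((abs_le.mp hNg).1) hr
      rw [hsplitgf]
      nlinarith
    rw [abs_le]
    constructor
    · linarith [hlo]
    · linarith [hup]

theorem aggregation_cut_norm_bound (r : ℝ) (f : ℝ → ℝ) (hf : Measurable f)
    (hfr : ∀ᵐ x ∂(volume.restrict (Set.Icc (0:ℝ) 1)), |f x| ≤ r)
    (W V : ℝ → ℝ → ℝ)
    (hWmeas : Measurable (Function.uncurry W)) (hVmeas : Measurable (Function.uncurry V))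
    (hWb : ∀ x y, W x y ∈ Set.Icc (-1 : ℝ) 1) (hVb : ∀ x y, V x y ∈ Set.Icc (-1 : ℝ) 1) :
    sigCutNorm1 (fun x => (∫ y in Set.Icc (0:ℝ) 1, W x y * f y) -
        ∫ y in Set.Icc (0:ℝ) 1, V x y * f y) ≤
      2 * r * kernelCutNorm (fun x y => W x y - V x y) ∧
    ((∀ᵐ y ∂(volume.restrict (Set.Icc (0:ℝ) 1)), 0 ≤ f y) →
      sigCutNorm1 (fun x => (∫ y in Set.Icc (0:ℝ) 1, W x y * f y) -
          ∫ y in Set.Icc (0:ℝ) 1, V x y * f y) ≤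
        r * kernelCutNorm (fun x y => W x y - V x y)) := by
  set I : Set ℝ := Set.Icc 0 1 with hI
  haveI hνfin : IsFiniteMeasure (volume.restrict I) := finite_restrict_of_subset le_rfl
  haveI : Nonempty {S : Set ℝ // MeasurableSet S ∧ S ⊆ Set.Icc 0 1} :=
    ⟨⟨∅, MeasurableSet.empty, Set.empty_subset _⟩⟩
  -- r is nonnegative
  have hr : 0 ≤ r := by
    have hne : (volume.restrict I) ≠ 0 := by
      intro h
      have h1 : (volume.restrict I) Set.univ = 0 := by rw [h]; simp
      rw [Measure.restrict_apply_univ, hI, Real.volume_Icc] at h1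
      norm_num at h1
    haveI : (ae (volume.restrict I)).NeBot := ae_neBot.mpr hne
    obtain ⟨x, hx⟩ := hfr.exists
    exact le_trans (abs_nonneg _) hx
  set U : ℝ → ℝ → ℝ := fun x y => W x y - V x y with hU
  have hUmeas : Measurable (Function.uncurry U) := hWmeas.sub hVmeas
  have hUb : ∀ x y, |U x y| ≤ 2 := by
    intro x y
    have h1 := hWb x y
    have h2 := hVb x y
    simp only [Set.mem_Icc] at h1 h2
    have h3 : |W x y - V x y| ≤ 2 := by
      rw [abs_le]; constructor <;> linarith [h1.1, h1.2, h2.1, h2.2]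
    simpa [hU] using h3
  have hfi : Integrable f (volume.restrict I) :=
    Integrable.mono' (integrable_const r) hf.aestronglyMeasurable
      (by simpa [Real.norm_eq_abs] using hfr)
  -- rewrite the integrand
  have hfun : (fun x => (∫ y in Set.Icc (0:ℝ) 1, W x y * f y) -
      ∫ y in Set.Icc (0:ℝ) 1, V x y * f y) = fun x => ∫ y in Set.Icc (0:ℝ) 1, U x y * f y := by
    funext x
    have hWint : Integrable (fun y => W x y * f y) (volume.restrict I) :=
      Integrable.bdd_mul hfi ((hWmeas.comp measurable_prodMk_left).aestronglyMeasurable)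
        (c := 1) (ae_of_all _ fun y => by
          have := hWb x y; simp only [Set.mem_Icc] at this
          rw [Real.norm_eq_abs, abs_le]; exact ⟨by linarith [this.1], this.2⟩)
    have hVint : Integrable (fun y => V x y * f y) (volume.restrict I) :=
      Integrable.bdd_mul hfi ((hVmeas.comp measurable_prodMk_left).aestronglyMeasurable)
        (c := 1) (ae_of_all _ fun y => by
          have := hVb x y; simp only [Set.mem_Icc] at this
          rw [Real.norm_eq_abs, abs_le]; exact ⟨by linarith [this.1], this.2⟩)
    rw [← integral_sub hWint hVint]
    congr 1
    funext y
    simp only [hU]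
    ring
  constructor
  · rw [sigCutNorm1, hfun]
    refine ciSup_le fun S => ?_
    exact (main_bound r hr f hf hfr U hUmeas hUb S.1 S.2.1 S.2.2).1
  · intro hf0
    rw [sigCutNorm1, hfun]
    refine ciSup_le fun S => ?_
    exact (main_bound r hr f hf hfr U hUmeas hUb S.1 S.2.1 S.2.2).2 hf0
end
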